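/- Let k ≥ 1, let A and B be real symmetric k×k matrices with B positive definite, and suppose A ⪰ c·B in the Loewner order for some constant c > 0. Then A is positive definite and for every real symmetric k×k matrix M, ‖A^{-1/2} M A^{-1/2}‖ ≤ (1/c)·‖B^{-1/2} M B^{-1/2}‖, where X^{1/2} denotes the unique positive definite square root of a positive definite matrix X, X^{-1/2} its inverse, and ‖·‖ the operator (spectral) norm. -/

import Mathlib

/-!
With `S = √A`, `T = √B` and `K = T S⁻¹` one has `S⁻¹ M S⁻¹ = Kᴴ (T⁻¹ M T⁻¹) K`, so
`‖S⁻¹ M S⁻¹‖ ≤ ‖K‖² ‖T⁻¹ M T⁻¹‖`. Conjugating `c B ≤ A` by `S⁻¹` gives `c Kᴴ K ≤ 1`,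
i.e. `c ‖K x‖² ≤ ‖x‖²` for every `x`, hence `‖K‖² ≤ 1 / c`.
-/

open scoped BigOperators
open Matrix
open scoped MatrixOrder

/-- Operator (spectral) norm of a matrix. -/
noncomputable def opNorm {k : ℕ} (A : Matrix (Fin k) (Fin k) ℝ) : ℝ :=
  ‖Matrix.toEuclideanCLM (𝕜 := ℝ) A‖

lemma norm_star_mul_mul_le {R : Type*} [NonUnitalSeminormedRing R] [StarRing R]
    [NormedStarGroup R] (a b : R) : ‖star a * b * a‖ ≤ ‖a‖ ^ 2 * ‖b‖ :=
  calc ‖star a * b * a‖ ≤ ‖star a‖ * ‖b‖ * ‖a‖ := norm_mul₃_le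
    _ = ‖a‖ ^ 2 * ‖b‖ := by rw [norm_star]; ring

namespace ContinuousLinearMap

variable {𝕜 E F : Type*} [RCLike 𝕜] [NormedAddCommGroup E] [NormedAddCommGroup F]
  [InnerProductSpace 𝕜 E] [InnerProductSpace 𝕜 F] [CompleteSpace E] [CompleteSpace F]

lemma norm_sq_le_of_adjoint_comp_self_le {T : E →L[𝕜] F} {r : ℝ} (hr : 0 ≤ r)
    (h : adjoint T ∘L T ≤ (r : 𝕜) • 1) : ‖T‖ ^ 2 ≤ r := by
  have hsq : ∀ x, ‖T x‖ ^ 2 ≤ (√r * ‖x‖) ^ 2 := fun x => by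
    have := ((le_def _ _).mp h).re_inner_nonneg_left x
    simp only [_root_.sub_apply, _root_.smul_apply, one_apply_eq_self, inner_sub_left,
      inner_smul_left, map_sub, RCLike.conj_ofReal, RCLike.re_ofReal_mul,
      ← apply_norm_sq_eq_inner_adjoint_left, inner_self_eq_norm_sq] at this
    rw [mul_pow, Real.sq_sqrt hr]
    linarith
  have hle : ‖T‖ ≤ √r := T.opNorm_le_bound (Real.sqrt_nonneg r) fun x =>
    (pow_le_pow_iff_left₀ (norm_nonneg _) (by positivity) two_ne_zero).mp (hsq x)
  exact (Real.le_sqrt (norm_nonneg T) hr).mp hle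

end ContinuousLinearMap

namespace Matrix

open scoped ComplexOrder

variable {n 𝕜 : Type*} [Fintype n] [DecidableEq n] [RCLike 𝕜]

lemma norm_toEuclideanCLM_sq_le {K : Matrix n n 𝕜} {r : ℝ} (hr : 0 ≤ r)
    (h : Kᴴ * K ≤ r • 1) : ‖toEuclideanCLM (n := n) (𝕜 := 𝕜) K‖ ^ 2 ≤ r := by
  have hpos := (isPositive_toEuclideanLin_iff (A := r • 1 - Kᴴ * K)).mpr (le_iff.mp h)
  have hmap : toEuclideanCLM (n := n) (𝕜 := 𝕜) (r • 1 - Kᴴ * K)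
      = (r : 𝕜) • 1 - ContinuousLinearMap.adjoint (toEuclideanCLM (n := n) (𝕜 := 𝕜) K) ∘L
        toEuclideanCLM (n := n) (𝕜 := 𝕜) K := by
    rw [map_sub, map_mul, ← star_eq_conjTranspose, map_star,
      RCLike.real_smul_eq_coe_smul (K := 𝕜), map_smul, map_one,
      ContinuousLinearMap.star_eq_adjoint]
    rfl
  refine ContinuousLinearMap.norm_sq_le_of_adjoint_comp_self_le hr ?_
  rw [ContinuousLinearMap.le_def, ← ContinuousLinearMap.isPositive_toLinearMap_iff, ← hmap]
  exact hpos

lemma PosDef.isUnit_det_sqrt {A : Matrix n n 𝕜} (hA : A.PosDef) : IsUnit (CFC.sqrt A).det :=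
  (isUnit_iff_isUnit_det _).mp <| (CFC.isUnit_sqrt_iff A hA.posSemidef.nonneg).mpr hA.isUnit

lemma conjTranspose_sqrt (A : Matrix n n 𝕜) : (CFC.sqrt A)ᴴ = CFC.sqrt A :=
  (IsSelfAdjoint.of_nonneg (CFC.sqrt_nonneg A)).star_eq

lemma conjTranspose_inv_sqrt (A : Matrix n n 𝕜) : (CFC.sqrt A)⁻¹ᴴ = (CFC.sqrt A)⁻¹ := by
  rw [conjTranspose_nonsing_inv, conjTranspose_sqrt]

lemma mul_mul_eq_conjTranspose_mul_mul {S T : Matrix n n 𝕜} (hS : Sᴴ = S) (hT : Tᴴ = T)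
    (hTdet : IsUnit T.det) (M : Matrix n n 𝕜) :
    S * M * S = (T * S)ᴴ * (T⁻¹ * M * T⁻¹) * (T * S) := by
  rw [conjTranspose_mul, hS, hT]
  simp only [Matrix.mul_assoc, mul_nonsing_inv_cancel_left _ _ hTdet,
    nonsing_inv_mul_cancel_left _ _ hTdet]

lemma conjTranspose_mul_self_le_of_smul_le {S T : Matrix n n 𝕜} (hSdet : IsUnit S.det)
    {c : ℝ} (hc : 0 < c) (h : c • (Tᴴ * T) ≤ Sᴴ * S) :
    (T * S⁻¹)ᴴ * (T * S⁻¹) ≤ c⁻¹ • 1 := by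
  have hle : c • ((T * S⁻¹)ᴴ * (T * S⁻¹)) ≤ 1 := by
    have hS : S⁻¹ᴴ * (Sᴴ * S) * S⁻¹ = 1 := by
      rw [← Matrix.mul_assoc, ← conjTranspose_mul, mul_nonsing_inv _ hSdet,
        conjTranspose_one, Matrix.one_mul, mul_nonsing_inv _ hSdet]
    calc c • ((T * S⁻¹)ᴴ * (T * S⁻¹)) = star S⁻¹ * (c • (Tᴴ * T)) * S⁻¹ := by
          simp only [conjTranspose_mul, star_eq_conjTranspose, Matrix.mul_smul, Matrix.smul_mul,
            Matrix.mul_assoc]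
      _ ≤ star S⁻¹ * (Sᴴ * S) * S⁻¹ := star_left_conjugate_le_conjugate h S⁻¹
      _ = 1 := hS
  simpa [inv_smul_smul₀ hc.ne'] using smul_le_smul_of_nonneg_left hle (inv_nonneg.mpr hc.le)

end Matrix

theorem loewner_inv_sqrt_conj_opNorm_general {k : ℕ} (A B : Matrix (Fin k) (Fin k) ℝ)
    (hB : B.PosDef) (c : ℝ) (hc : 0 < c)
    (hAB : (A - c • B).PosSemidef) :
    ∃ hA : A.PosDef, ∀ M : Matrix (Fin k) (Fin k) ℝ, M.IsSymm →
      opNorm ((CFC.sqrt A)⁻¹ * M * (CFC.sqrt A)⁻¹)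
        ≤ (1 / c) * opNorm ((CFC.sqrt B)⁻¹ * M * (CFC.sqrt B)⁻¹) := by
  have hA : A.PosDef := by simpa using PosDef.posSemidef_add hAB (hB.smul hc)
  refine ⟨hA, fun M _ => ?_⟩
  have hBA : c • ((CFC.sqrt B)ᴴ * CFC.sqrt B) ≤ (CFC.sqrt A)ᴴ * CFC.sqrt A := by
    rw [conjTranspose_sqrt, conjTranspose_sqrt, CFC.sqrt_mul_sqrt_self A hA.posSemidef.nonneg,
      CFC.sqrt_mul_sqrt_self B hB.posSemidef.nonneg]
    exact le_iff.mpr hAB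
  set K := CFC.sqrt B * (CFC.sqrt A)⁻¹
  have hK : ‖toEuclideanCLM (𝕜 := ℝ) K‖ ^ 2 ≤ c⁻¹ :=
    norm_toEuclideanCLM_sq_le (inv_nonneg.mpr hc.le)
      (conjTranspose_mul_self_le_of_smul_le hA.isUnit_det_sqrt hc hBA)
  rw [mul_mul_eq_conjTranspose_mul_mul (conjTranspose_inv_sqrt A) (conjTranspose_sqrt B)
    hB.isUnit_det_sqrt M]
  unfold opNorm
  rw [map_mul, map_mul, ← star_eq_conjTranspose, map_star, one_div]
  calc _ ≤ ‖toEuclideanCLM (𝕜 := ℝ) K‖ ^ 2 * _ := norm_star_mul_mul_le _ _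
    _ ≤ c⁻¹ * _ := by gcongr

/-- If `A, B` are real symmetric, `B` positive definite and `A ⪰ cB` (Loewner) with `c > 0`, then
`A` is positive definite (with proof `hA`), and for every real symmetric `M`,
`‖A^{-1/2} M A^{-1/2}‖ ≤ (1/c) ‖B^{-1/2} M B^{-1/2}‖` in the operator norm, where the square
roots are the unique positive definite ones. -/
theorem loewner_inv_sqrt_conj_opNorm {k : ℕ} (hk : 1 ≤ k) (A B : Matrix (Fin k) (Fin k) ℝ)
    (hAsymm : A.IsSymm) (hBsymm : B.IsSymm) (hB : B.PosDef) (c : ℝ) (hc : 0 < c)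
    (hAB : (A - c • B).PosSemidef) :
    ∃ hA : A.PosDef, ∀ M : Matrix (Fin k) (Fin k) ℝ, M.IsSymm →
      opNorm ((CFC.sqrt A)⁻¹ * M * (CFC.sqrt A)⁻¹)
        ≤ (1 / c) * opNorm ((CFC.sqrt B)⁻¹ * M * (CFC.sqrt B)⁻¹) :=
  loewner_inv_sqrt_conj_opNorm_general A B hB c hc hAB
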